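/- (Theorem II.3.) Assume (H0) and d₁, d₂, l > 0, and let k₁, k₂ be natural numbers at which hypothesis (H3) holds: B_k − C_k > 0, −A_k² + 2·B_k + b₁₁² > 0 and (A_k² − 2·B_k − b₁₁²)² > 4·(B_k² − C_k²) for k = k₁ and k = k₂. Suppose there are natural numbers j₁, j₂ with τ_{k₁}^{j₁+} = τ_{k₂}^{j₂−} =: τ*. Then λ = i·ω_{k₁}⁺ is a root of the characteristic equation at mode k₁ with delay τ*, and λ = i·ω_{k₂}⁻ is a root of the characteristic equation at mode k₂ with delay τ*; consequently the characteristic equations at delay τ* admit the two pairs of purely imaginary roots ±i·ω_{k₁}⁺ and ±i·ω_{k₂}⁻. -/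

import Mathlib

open Real

/-- Δ = M² − 4·K·(a·m + c·p)·(a·r₂ + c·d − c·r₀) with M = a·m + c·p + K·(a·r₂ + c·d). -/
noncomputable def Delta (r₀ r₂ K d a p c m : ℝ) : ℝ :=
  (a*m + c*p + K*(a*r₂ + c*d))^2 - 4*K*(a*m + c*p)*(a*r₂ + c*d - c*r₀)

/-- The positive equilibrium predator density v⋆. -/
noncomputable def vstar (r₀ r₂ K d a p c m : ℝ) : ℝ :=
  (-(a*m + c*p + K*(a*r₂ + c*d)) + Real.sqrt (Delta r₀ r₂ K d a p c m)) / (2*K*(a*m + c*p))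

/-- The positive equilibrium prey density u⋆ = (r₂ + m·v⋆)/c. -/
noncomputable def ustar (r₀ r₂ K d a p c m : ℝ) : ℝ := (r₂ + m * vstar r₀ r₂ K d a p c m) / c

/-- Linearization coefficient a₁₂. -/
noncomputable def a12 (r₀ r₂ K d a p c m : ℝ) : ℝ :=
  -K*r₀*ustar r₀ r₂ K d a p c m / (1 + K*vstar r₀ r₂ K d a p c m)^2 - p*ustar r₀ r₂ K d a p c m

/-- Linearization coefficient a₂₁. -/
noncomputable def a21 (r₀ r₂ K d a p c m : ℝ) : ℝ := c * vstar r₀ r₂ K d a p c m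

/-- Linearization coefficient a₂₂. -/
noncomputable def a22 (r₀ r₂ K d a p c m : ℝ) : ℝ := -m * vstar r₀ r₂ K d a p c m

/-- Linearization coefficient b₁₁. -/
noncomputable def b11 (r₀ r₂ K d a p c m : ℝ) : ℝ := -a * ustar r₀ r₂ K d a p c m

/-- A_k = (d₁ + d₂)·k²/l² − a₂₂. -/
noncomputable def Ak (r₀ r₂ K d a p c m d₁ d₂ l : ℝ) (k : ℕ) : ℝ :=
  (d₁ + d₂)*(k:ℝ)^2/l^2 - a22 r₀ r₂ K d a p c m

/-- B_k = d₁·d₂·k⁴/l⁴ − a₂₂·d₁·k²/l² − a₁₂·a₂₁. -/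
noncomputable def Bk (r₀ r₂ K d a p c m d₁ d₂ l : ℝ) (k : ℕ) : ℝ :=
  d₁*d₂*(k:ℝ)^4/l^4 - a22 r₀ r₂ K d a p c m * d₁*(k:ℝ)^2/l^2 - a12 r₀ r₂ K d a p c m * a21 r₀ r₂ K d a p c m

/-- C_k = −b₁₁·d₂·k²/l² + a₂₂·b₁₁. -/
noncomputable def Ck (r₀ r₂ K d a p c m d₁ d₂ l : ℝ) (k : ℕ) : ℝ :=
  -(b11 r₀ r₂ K d a p c m)*d₂*(k:ℝ)^2/l^2 + a22 r₀ r₂ K d a p c m * b11 r₀ r₂ K d a p c m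

/-- The characteristic equation at mode k with delay τ:
λ² + A_k·λ + B_k + (−b₁₁·λ + C_k)·exp(−λτ) = 0. -/
def charEq (r₀ r₂ K d a p c m d₁ d₂ l : ℝ) (k : ℕ) (τ : ℝ) (z : ℂ) : Prop :=
  z^2 + (Ak r₀ r₂ K d a p c m d₁ d₂ l k : ℂ)*z + (Bk r₀ r₂ K d a p c m d₁ d₂ l k : ℂ)
    + (-(b11 r₀ r₂ K d a p c m : ℂ)*z + (Ck r₀ r₂ K d a p c m d₁ d₂ l k : ℂ)) * Complex.exp (-z*(τ:ℂ)) = 0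

/-- Ĉ_k(ω) = (d₁·b₁₁·ω²·k²/l² − B_k·C_k)/(b₁₁²·ω² + C_k²). -/
noncomputable def Chat (r₀ r₂ K d a p c m d₁ d₂ l : ℝ) (k : ℕ) (ω : ℝ) : ℝ :=
  (d₁ * b11 r₀ r₂ K d a p c m * ω^2 * (k:ℝ)^2/l^2 - Bk r₀ r₂ K d a p c m d₁ d₂ l k * Ck r₀ r₂ K d a p c m d₁ d₂ l k) /
    ((b11 r₀ r₂ K d a p c m)^2*ω^2 + (Ck r₀ r₂ K d a p c m d₁ d₂ l k)^2)

/-- S_k(ω) = (A_k·C_k·ω + B_k·b₁₁·ω − b₁₁·ω³)/(b₁₁²·ω² + C_k²). -/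
noncomputable def Sk (r₀ r₂ K d a p c m d₁ d₂ l : ℝ) (k : ℕ) (ω : ℝ) : ℝ :=
  (Ak r₀ r₂ K d a p c m d₁ d₂ l k * Ck r₀ r₂ K d a p c m d₁ d₂ l k * ω + Bk r₀ r₂ K d a p c m d₁ d₂ l k * b11 r₀ r₂ K d a p c m * ω - b11 r₀ r₂ K d a p c m * ω^3) /
    ((b11 r₀ r₂ K d a p c m)^2*ω^2 + (Ck r₀ r₂ K d a p c m d₁ d₂ l k)^2)

/-- ω_k⁺. -/
noncomputable def omegaP (r₀ r₂ K d a p c m d₁ d₂ l : ℝ) (k : ℕ) : ℝ :=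
  Real.sqrt ((-(Ak r₀ r₂ K d a p c m d₁ d₂ l k)^2 + 2*Bk r₀ r₂ K d a p c m d₁ d₂ l k + (b11 r₀ r₂ K d a p c m)^2
    + Real.sqrt (((Ak r₀ r₂ K d a p c m d₁ d₂ l k)^2 - 2*Bk r₀ r₂ K d a p c m d₁ d₂ l k - (b11 r₀ r₂ K d a p c m)^2)^2
      - 4*((Bk r₀ r₂ K d a p c m d₁ d₂ l k)^2 - (Ck r₀ r₂ K d a p c m d₁ d₂ l k)^2))) / 2)

/-- ω_k⁻. -/
noncomputable def omegaM (r₀ r₂ K d a p c m d₁ d₂ l : ℝ) (k : ℕ) : ℝ :=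
  Real.sqrt ((-(Ak r₀ r₂ K d a p c m d₁ d₂ l k)^2 + 2*Bk r₀ r₂ K d a p c m d₁ d₂ l k + (b11 r₀ r₂ K d a p c m)^2
    - Real.sqrt (((Ak r₀ r₂ K d a p c m d₁ d₂ l k)^2 - 2*Bk r₀ r₂ K d a p c m d₁ d₂ l k - (b11 r₀ r₂ K d a p c m)^2)^2
      - 4*((Bk r₀ r₂ K d a p c m d₁ d₂ l k)^2 - (Ck r₀ r₂ K d a p c m d₁ d₂ l k)^2))) / 2)

/-- τ_k^(j+) = (π − arcsin S_k(ω_k⁺) + 2jπ)/ω_k⁺. -/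
noncomputable def tauP (r₀ r₂ K d a p c m d₁ d₂ l : ℝ) (k j : ℕ) : ℝ :=
  (Real.pi - Real.arcsin (Sk r₀ r₂ K d a p c m d₁ d₂ l k (omegaP r₀ r₂ K d a p c m d₁ d₂ l k)) + 2*(j:ℝ)*Real.pi) / omegaP r₀ r₂ K d a p c m d₁ d₂ l k

/-- τ_k^(j−) = (π − arcsin S_k(ω_k⁻) + 2jπ)/ω_k⁻. -/
noncomputable def tauM (r₀ r₂ K d a p c m d₁ d₂ l : ℝ) (k j : ℕ) : ℝ :=
  (Real.pi - Real.arcsin (Sk r₀ r₂ K d a p c m d₁ d₂ l k (omegaM r₀ r₂ K d a p c m d₁ d₂ l k)) + 2*(j:ℝ)*Real.pi) / omegaM r₀ r₂ K d a p c m d₁ d₂ l k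

/-- Hypothesis (H3) at mode k. -/
def H3 (r₀ r₂ K d a p c m d₁ d₂ l : ℝ) (k : ℕ) : Prop :=
  Bk r₀ r₂ K d a p c m d₁ d₂ l k - Ck r₀ r₂ K d a p c m d₁ d₂ l k > 0 ∧ -(Ak r₀ r₂ K d a p c m d₁ d₂ l k)^2 + 2*Bk r₀ r₂ K d a p c m d₁ d₂ l k + (b11 r₀ r₂ K d a p c m)^2 > 0 ∧
    ((Ak r₀ r₂ K d a p c m d₁ d₂ l k)^2 - 2*Bk r₀ r₂ K d a p c m d₁ d₂ l k - (b11 r₀ r₂ K d a p c m)^2)^2 > 4*((Bk r₀ r₂ K d a p c m d₁ d₂ l k)^2 - (Ck r₀ r₂ K d a p c m d₁ d₂ l k)^2)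


section Aux

lemma exp_neg_I' (ω τ : ℝ) :
    Complex.exp (-(Complex.I*(ω:ℂ))*(τ:ℂ)) = (Real.cos (ω*τ) : ℂ) - (Real.sin (ω*τ):ℂ)*Complex.I := by
  rw [show -(Complex.I*(ω:ℂ))*(τ:ℂ) = ((-(ω*τ):ℝ):ℂ)*Complex.I by push_cast; ring,
    Complex.exp_mul_I, ← Complex.ofReal_cos, ← Complex.ofReal_sin, Real.cos_neg, Real.sin_neg]
  push_cast; ring

lemma exp_pos_I' (ω τ : ℝ) :
    Complex.exp (-(-(Complex.I*(ω:ℂ)))*(τ:ℂ)) = (Real.cos (ω*τ) : ℂ) + (Real.sin (ω*τ):ℂ)*Complex.I := by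
  rw [show -(-(Complex.I*(ω:ℂ)))*(τ:ℂ) = (((ω*τ):ℝ):ℂ)*Complex.I by push_cast; ring,
    Complex.exp_mul_I, ← Complex.ofReal_cos, ← Complex.ofReal_sin]

lemma root_of_trig' (A B C b ω τ : ℝ) (hD : b^2*ω^2 + C^2 ≠ 0)
    (hcos : Real.cos (ω*τ) = (((C+A*b)*ω^2 - B*C)/(b^2*ω^2+C^2)))
    (hsin : Real.sin (ω*τ) = ((ω*(A*C+b*B-b*ω^2))/(b^2*ω^2+C^2))) :
    ((Complex.I*(ω:ℂ))^2 + (A:ℂ)*(Complex.I*(ω:ℂ)) + (B:ℂ)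
      + (-(b:ℂ)*(Complex.I*(ω:ℂ))+(C:ℂ))*Complex.exp (-(Complex.I*(ω:ℂ))*(τ:ℂ)) = 0) ∧
    ((-(Complex.I*(ω:ℂ)))^2 + (A:ℂ)*(-(Complex.I*(ω:ℂ))) + (B:ℂ)
      + (-(b:ℂ)*(-(Complex.I*(ω:ℂ)))+(C:ℂ))*Complex.exp (-(-(Complex.I*(ω:ℂ)))*(τ:ℂ)) = 0) := by
  set x := Real.cos (ω*τ) with hx
  set y := Real.sin (ω*τ) with hy
  have hre : -ω^2 + B + C*x - b*ω*y = 0 := by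
    rw [hcos, hsin, div_eq_mul_inv, div_eq_mul_inv]; linear_combination (ω^2 - B) * mul_inv_cancel₀ hD
  have him : A*ω - b*ω*x - C*y = 0 := by
    rw [hcos, hsin, div_eq_mul_inv, div_eq_mul_inv]; linear_combination (-(A*ω)) * mul_inv_cancel₀ hD
  have hreC : (-(ω:ℂ)^2 + B + C*x - b*ω*y) = 0 := by exact_mod_cast congrArg (Complex.ofReal) hre
  have himC : ((A:ℂ)*ω - b*ω*x - C*y) = 0 := by exact_mod_cast congrArg (Complex.ofReal) him
  constructor
  · rw [exp_neg_I', ← hx, ← hy]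
    linear_combination hreC + Complex.I * himC + ((ω:ℂ)^2 + (b:ℂ)*(y:ℂ)*(ω:ℂ)) * Complex.I_sq
  · rw [exp_pos_I', ← hx, ← hy]
    linear_combination hreC - Complex.I * himC + ((ω:ℂ)^2 + (b:ℂ)*(y:ℂ)*(ω:ℂ)) * Complex.I_sq

lemma trig_vals' (A B C b ω τ Sval : ℝ) (j : ℕ) (hω : 0 < ω) (hD : 0 < b^2*ω^2+C^2)
    (hS : Sval = (ω*(A*C+b*B-b*ω^2))/(b^2*ω^2+C^2))
    (hτ : τ = (Real.pi - Real.arcsin Sval + 2*(j:ℝ)*Real.pi)/ω)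
    (hnumC : (C+A*b)*ω^2 - B*C < 0)
    (hE : ω^4 + (A^2-2*B-b^2)*ω^2 + (B^2-C^2) = 0) :
    Real.cos (ω*τ) = (((C+A*b)*ω^2 - B*C)/(b^2*ω^2+C^2)) ∧
    Real.sin (ω*τ) = ((ω*(A*C+b*B-b*ω^2))/(b^2*ω^2+C^2)) := by
  have hτω : ω * τ = (Real.pi - Real.arcsin Sval) + (j:ℝ)*(2*Real.pi) := by
    rw [hτ]; field_simp
  have key : (ω*(A*C+b*B-b*ω^2))^2 + ((C+A*b)*ω^2 - B*C)^2 = (b^2*ω^2+C^2)^2 := by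
    linear_combination (b^2*ω^2+C^2)*hE
  have hD2 : (0:ℝ) < (b^2*ω^2+C^2)^2 := by positivity
  have h1 : Sval^2 ≤ 1 := by
    rw [hS, div_pow, div_le_one hD2]
    nlinarith [sq_nonneg ((C+A*b)*ω^2 - B*C)]
  have hSle : Sval ≤ 1 := by nlinarith [sq_nonneg (Sval - 1)]
  have hSge : -1 ≤ Sval := by nlinarith [sq_nonneg (Sval + 1)]
  have hsin : Real.sin (ω*τ) = Sval := by
    rw [hτω, Real.sin_add_nat_mul_two_pi, Real.sin_pi_sub, Real.sin_arcsin hSge hSle]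
  have h2 : 1 - Sval^2 = (((C+A*b)*ω^2 - B*C)/(b^2*ω^2+C^2))^2 := by
    rw [hS, div_pow, div_pow, eq_div_iff hD2.ne', sub_mul, one_mul,
      div_mul_cancel₀ _ hD2.ne']
    linarith [key]
  have hq : ((C+A*b)*ω^2 - B*C)/(b^2*ω^2+C^2) < 0 := div_neg_of_neg_of_pos hnumC hD
  have hcos : Real.cos (ω*τ) = (((C+A*b)*ω^2 - B*C)/(b^2*ω^2+C^2)) := by
    rw [hτω, Real.cos_add_nat_mul_two_pi, Real.cos_pi_sub, Real.cos_arcsin]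
    rw [h2, Real.sqrt_sq_eq_abs, abs_of_neg hq, neg_neg]
  exact ⟨hcos, by rw [hsin, hS]⟩

lemma mode_root' (A B C b ω τ Sval : ℝ) (j : ℕ)
    (hb : b < 0) (hB : 0 < B) (hC : 0 < C)
    (hCA : C + A*b ≤ 0)
    (hω : 0 < ω) (hE : ω^4 + (A^2-2*B-b^2)*ω^2 + (B^2-C^2) = 0)
    (hS : Sval = (ω*(A*C+b*B-b*ω^2))/(b^2*ω^2+C^2))
    (hτ : τ = (Real.pi - Real.arcsin Sval + 2*(j:ℝ)*Real.pi)/ω) :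
    ((Complex.I*(ω:ℂ))^2 + (A:ℂ)*(Complex.I*(ω:ℂ)) + (B:ℂ)
      + (-(b:ℂ)*(Complex.I*(ω:ℂ))+(C:ℂ))*Complex.exp (-(Complex.I*(ω:ℂ))*(τ:ℂ)) = 0) ∧
    ((-(Complex.I*(ω:ℂ)))^2 + (A:ℂ)*(-(Complex.I*(ω:ℂ))) + (B:ℂ)
      + (-(b:ℂ)*(-(Complex.I*(ω:ℂ)))+(C:ℂ))*Complex.exp (-(-(Complex.I*(ω:ℂ)))*(τ:ℂ)) = 0) := by
  have hD : 0 < b^2*ω^2 + C^2 := by nlinarith [sq_nonneg (b*ω), pow_pos hC 2]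
  have hnumC : (C+A*b)*ω^2 - B*C < 0 := by
    nlinarith [mul_pos hB hC, mul_nonneg (neg_nonneg.2 hCA) (sq_nonneg ω)]
  obtain ⟨hcos, hsin⟩ := trig_vals' A B C b ω τ Sval j hω hD hS hτ hnumC hE
  exact root_of_trig' A B C b ω τ hD.ne' hcos hsin

lemma omega_props' (A B C b ω s : ℝ) (hs : s = 1 ∨ s = -1)
    (h1 : 0 < B - C) (hB : 0 < B) (hC : 0 < C)
    (h2 : 0 < -A^2+2*B+b^2) (h3 : 4*(B^2-C^2) < (A^2-2*B-b^2)^2)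
    (hωeq : ω = Real.sqrt ((-A^2+2*B+b^2 + s*Real.sqrt ((A^2-2*B-b^2)^2 - 4*(B^2-C^2)))/2)) :
    0 < ω ∧ ω^4 + (A^2-2*B-b^2)*ω^2 + (B^2-C^2) = 0 := by
  have hY : 0 < B^2 - C^2 := by nlinarith
  have hdnn : 0 ≤ (A^2-2*B-b^2)^2 - 4*(B^2-C^2) := by linarith
  have hsq : (Real.sqrt ((A^2-2*B-b^2)^2 - 4*(B^2-C^2)))^2 = (A^2-2*B-b^2)^2 - 4*(B^2-C^2) :=
    Real.sq_sqrt hdnn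
  have hlt : Real.sqrt ((A^2-2*B-b^2)^2 - 4*(B^2-C^2)) < -A^2+2*B+b^2 := by
    have hD2 : (A^2-2*B-b^2)^2 - 4*(B^2-C^2) < (-A^2+2*B+b^2)^2 := by nlinarith
    have := Real.sqrt_lt_sqrt hdnn hD2
    rwa [Real.sqrt_sq h2.le] at this
  have hnn : 0 ≤ Real.sqrt ((A^2-2*B-b^2)^2 - 4*(B^2-C^2)) := Real.sqrt_nonneg _
  have hinner : 0 < (-A^2+2*B+b^2 + s*Real.sqrt ((A^2-2*B-b^2)^2 - 4*(B^2-C^2)))/2 := by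
    rcases hs with h|h <;> subst h <;> [linarith; linarith]
  have hωpos : 0 < ω := by rw [hωeq]; exact Real.sqrt_pos.2 hinner
  refine ⟨hωpos, ?_⟩
  have hω2 : ω^2 = (-A^2+2*B+b^2 + s*Real.sqrt ((A^2-2*B-b^2)^2 - 4*(B^2-C^2)))/2 := by
    rw [hωeq]; exact Real.sq_sqrt hinner.le
  rw [show ω^4 = (ω^2)^2 by ring, hω2]
  rcases hs with h|h <;> subst h <;> linear_combination (1/4:ℝ)*hsq

lemma vstar_pos' (r₀ r₂ K d a p c m : ℝ) (hr₀ : 0 < r₀) (hr₂ : 0 < r₂) (hK : 0 < K)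
    (hd : 0 < d) (ha : 0 < a) (hp : 0 < p) (hc : 0 < c) (hm : 0 < m)
    (hH0 : a*r₂ + c*d - c*r₀ < 0) : 0 < vstar r₀ r₂ K d a p c m := by
  have hM : 0 < a*m + c*p + K*(a*r₂ + c*d) := by positivity
  have h3 : 0 < K*(a*m+c*p) := by positivity
  have hΔ : (a*m + c*p + K*(a*r₂ + c*d))^2 < Delta r₀ r₂ K d a p c m := by
    unfold Delta
    nlinarith [mul_pos h3 (neg_pos.2 hH0)]
  have h2 : a*m + c*p + K*(a*r₂+c*d) < Real.sqrt (Delta r₀ r₂ K d a p c m) := by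
    have := Real.sqrt_lt_sqrt (sq_nonneg (a*m + c*p + K*(a*r₂ + c*d))) hΔ
    rwa [Real.sqrt_sq hM.le] at this
  unfold vstar
  apply div_pos (by linarith) (by positivity)

end Aux

theorem stmt14 (r₀ r₂ K d a p c m d₁ d₂ l : ℝ) (hr₀ : 0 < r₀) (hr₂ : 0 < r₂) (hK : 0 < K) (hd : 0 < d) (ha : 0 < a) (hp : 0 < p) (hc : 0 < c) (hm : 0 < m)
    (hd₁ : 0 < d₁) (hd₂ : 0 < d₂) (hl : 0 < l)
    (hH0 : a*r₂ + c*d - c*r₀ < 0) (k₁ k₂ : ℕ) (hH3₁ : H3 r₀ r₂ K d a p c m d₁ d₂ l k₁) (hH3₂ : H3 r₀ r₂ K d a p c m d₁ d₂ l k₂)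
    (j₁ j₂ : ℕ) (τstar : ℝ)
    (hτ₁ : tauP r₀ r₂ K d a p c m d₁ d₂ l k₁ j₁ = τstar) (hτ₂ : tauM r₀ r₂ K d a p c m d₁ d₂ l k₂ j₂ = τstar) :
    charEq r₀ r₂ K d a p c m d₁ d₂ l k₁ τstar (Complex.I * (omegaP r₀ r₂ K d a p c m d₁ d₂ l k₁ : ℂ)) ∧
    charEq r₀ r₂ K d a p c m d₁ d₂ l k₁ τstar (-(Complex.I * (omegaP r₀ r₂ K d a p c m d₁ d₂ l k₁ : ℂ))) ∧
    charEq r₀ r₂ K d a p c m d₁ d₂ l k₂ τstar (Complex.I * (omegaM r₀ r₂ K d a p c m d₁ d₂ l k₂ : ℂ)) ∧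
    charEq r₀ r₂ K d a p c m d₁ d₂ l k₂ τstar (-(Complex.I * (omegaM r₀ r₂ K d a p c m d₁ d₂ l k₂ : ℂ)))  := by
  have hv : 0 < vstar r₀ r₂ K d a p c m := vstar_pos' r₀ r₂ K d a p c m hr₀ hr₂ hK hd ha hp hc hm hH0
  have hu : 0 < ustar r₀ r₂ K d a p c m := by
    unfold ustar
    apply div_pos (by nlinarith) hc
  have hb : b11 r₀ r₂ K d a p c m < 0 := by
    unfold b11; nlinarith
  have h22 : a22 r₀ r₂ K d a p c m < 0 := by
    unfold a22; nlinarith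
  have h21 : 0 < a21 r₀ r₂ K d a p c m := by
    unfold a21; exact mul_pos hc hv
  have h12 : a12 r₀ r₂ K d a p c m < 0 := by
    unfold a12
    have h1 : 0 < (1 + K*vstar r₀ r₂ K d a p c m)^2 := by positivity
    have h2 : 0 < K*r₀*ustar r₀ r₂ K d a p c m := by positivity
    have h4 : -K*r₀*ustar r₀ r₂ K d a p c m / (1 + K*vstar r₀ r₂ K d a p c m)^2 < 0 :=
      div_neg_of_neg_of_pos (by linarith) h1
    nlinarith [mul_pos hp hu]
  have hBpos : ∀ k : ℕ, 0 < Bk r₀ r₂ K d a p c m d₁ d₂ l k := by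
    intro k
    unfold Bk
    have t1 : (0:ℝ) ≤ d₁*d₂*(k:ℝ)^4/l^4 := by positivity
    have t2 : (0:ℝ) ≤ (-(a22 r₀ r₂ K d a p c m))*(d₁*(k:ℝ)^2/l^2) :=
      mul_nonneg (by linarith) (by positivity)
    have e2 : a22 r₀ r₂ K d a p c m * d₁*(k:ℝ)^2/l^2
        = -((-(a22 r₀ r₂ K d a p c m))*(d₁*(k:ℝ)^2/l^2)) := by ring
    have t3 : 0 < (-(a12 r₀ r₂ K d a p c m))*(a21 r₀ r₂ K d a p c m) :=
      mul_pos (by linarith) h21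
    have e3 : a12 r₀ r₂ K d a p c m * a21 r₀ r₂ K d a p c m
        = -((-(a12 r₀ r₂ K d a p c m))*(a21 r₀ r₂ K d a p c m)) := by ring
    rw [e2, e3]; linarith
  have hCpos : ∀ k : ℕ, 0 < Ck r₀ r₂ K d a p c m d₁ d₂ l k := by
    intro k
    unfold Ck
    have t1 : (0:ℝ) ≤ (-(b11 r₀ r₂ K d a p c m))*(d₂*(k:ℝ)^2/l^2) :=
      mul_nonneg (by linarith) (by positivity)
    have e1 : -(b11 r₀ r₂ K d a p c m)*d₂*(k:ℝ)^2/l^2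
        = (-(b11 r₀ r₂ K d a p c m))*(d₂*(k:ℝ)^2/l^2) := by ring
    have t2 : 0 < a22 r₀ r₂ K d a p c m * b11 r₀ r₂ K d a p c m :=
      mul_pos_of_neg_of_neg h22 hb
    rw [e1]; linarith
  have hCA : ∀ k : ℕ, Ck r₀ r₂ K d a p c m d₁ d₂ l k
      + Ak r₀ r₂ K d a p c m d₁ d₂ l k * b11 r₀ r₂ K d a p c m ≤ 0 := by
    intro k
    have e : Ck r₀ r₂ K d a p c m d₁ d₂ l k
        + Ak r₀ r₂ K d a p c m d₁ d₂ l k * b11 r₀ r₂ K d a p c m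
        = b11 r₀ r₂ K d a p c m * (d₁*(k:ℝ)^2/l^2) := by
      unfold Ak Ck; ring
    rw [e]
    exact mul_nonpos_of_nonpos_of_nonneg hb.le (by positivity)
  obtain ⟨hH3₁a, hH3₁b, hH3₁c⟩ := hH3₁
  obtain ⟨hH3₂a, hH3₂b, hH3₂c⟩ := hH3₂
  obtain ⟨hω₁, hE₁⟩ := omega_props' (Ak r₀ r₂ K d a p c m d₁ d₂ l k₁)
      (Bk r₀ r₂ K d a p c m d₁ d₂ l k₁) (Ck r₀ r₂ K d a p c m d₁ d₂ l k₁)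
      (b11 r₀ r₂ K d a p c m) (omegaP r₀ r₂ K d a p c m d₁ d₂ l k₁) 1 (Or.inl rfl)
      hH3₁a (hBpos k₁) (hCpos k₁) hH3₁b hH3₁c (by unfold omegaP; congr 1; ring)
  obtain ⟨hω₂, hE₂⟩ := omega_props' (Ak r₀ r₂ K d a p c m d₁ d₂ l k₂)
      (Bk r₀ r₂ K d a p c m d₁ d₂ l k₂) (Ck r₀ r₂ K d a p c m d₁ d₂ l k₂)
      (b11 r₀ r₂ K d a p c m) (omegaM r₀ r₂ K d a p c m d₁ d₂ l k₂) (-1) (Or.inr rfl)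
      hH3₂a (hBpos k₂) (hCpos k₂) hH3₂b hH3₂c (by unfold omegaM; congr 1; ring)
  have hS₁ : Sk r₀ r₂ K d a p c m d₁ d₂ l k₁ (omegaP r₀ r₂ K d a p c m d₁ d₂ l k₁)
      = (omegaP r₀ r₂ K d a p c m d₁ d₂ l k₁ * (Ak r₀ r₂ K d a p c m d₁ d₂ l k₁ * Ck r₀ r₂ K d a p c m d₁ d₂ l k₁
          + b11 r₀ r₂ K d a p c m * Bk r₀ r₂ K d a p c m d₁ d₂ l k₁
          - b11 r₀ r₂ K d a p c m * (omegaP r₀ r₂ K d a p c m d₁ d₂ l k₁)^2))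
        / ((b11 r₀ r₂ K d a p c m)^2*(omegaP r₀ r₂ K d a p c m d₁ d₂ l k₁)^2
          + (Ck r₀ r₂ K d a p c m d₁ d₂ l k₁)^2) := by
    unfold Sk; congr 1; ring
  have hS₂ : Sk r₀ r₂ K d a p c m d₁ d₂ l k₂ (omegaM r₀ r₂ K d a p c m d₁ d₂ l k₂)
      = (omegaM r₀ r₂ K d a p c m d₁ d₂ l k₂ * (Ak r₀ r₂ K d a p c m d₁ d₂ l k₂ * Ck r₀ r₂ K d a p c m d₁ d₂ l k₂
          + b11 r₀ r₂ K d a p c m * Bk r₀ r₂ K d a p c m d₁ d₂ l k₂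
          - b11 r₀ r₂ K d a p c m * (omegaM r₀ r₂ K d a p c m d₁ d₂ l k₂)^2))
        / ((b11 r₀ r₂ K d a p c m)^2*(omegaM r₀ r₂ K d a p c m d₁ d₂ l k₂)^2
          + (Ck r₀ r₂ K d a p c m d₁ d₂ l k₂)^2) := by
    unfold Sk; congr 1; ring
  have hτ₁' : τstar = (Real.pi - Real.arcsin (Sk r₀ r₂ K d a p c m d₁ d₂ l k₁ (omegaP r₀ r₂ K d a p c m d₁ d₂ l k₁))
      + 2*(j₁:ℝ)*Real.pi) / omegaP r₀ r₂ K d a p c m d₁ d₂ l k₁ := by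
    rw [← hτ₁]; rfl
  have hτ₂' : τstar = (Real.pi - Real.arcsin (Sk r₀ r₂ K d a p c m d₁ d₂ l k₂ (omegaM r₀ r₂ K d a p c m d₁ d₂ l k₂))
      + 2*(j₂:ℝ)*Real.pi) / omegaM r₀ r₂ K d a p c m d₁ d₂ l k₂ := by
    rw [← hτ₂]; rfl
  obtain ⟨r1, r2⟩ := mode_root' (Ak r₀ r₂ K d a p c m d₁ d₂ l k₁)
      (Bk r₀ r₂ K d a p c m d₁ d₂ l k₁) (Ck r₀ r₂ K d a p c m d₁ d₂ l k₁)
      (b11 r₀ r₂ K d a p c m) (omegaP r₀ r₂ K d a p c m d₁ d₂ l k₁) τstar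
      (Sk r₀ r₂ K d a p c m d₁ d₂ l k₁ (omegaP r₀ r₂ K d a p c m d₁ d₂ l k₁)) j₁
      hb (hBpos k₁) (hCpos k₁) (hCA k₁) hω₁ hE₁ hS₁ hτ₁'
  obtain ⟨r3, r4⟩ := mode_root' (Ak r₀ r₂ K d a p c m d₁ d₂ l k₂)
      (Bk r₀ r₂ K d a p c m d₁ d₂ l k₂) (Ck r₀ r₂ K d a p c m d₁ d₂ l k₂)
      (b11 r₀ r₂ K d a p c m) (omegaM r₀ r₂ K d a p c m d₁ d₂ l k₂) τstar
      (Sk r₀ r₂ K d a p c m d₁ d₂ l k₂ (omegaM r₀ r₂ K d a p c m d₁ d₂ l k₂)) j₂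
      hb (hBpos k₂) (hCpos k₂) (hCA k₂) hω₂ hE₂ hS₂ hτ₂'
  exact ⟨r1, r2, r3, r4⟩
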